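/- Let (G,p) be a framework with G a triangulated Laman graph and p ∈ P_G, and let {(G_i, p_i)}_{i=1}^m be the frameworks associated with the independent partition for (G,p). Then each G_i is a triangulated Laman graph, and each (G_i, p_i) is a line framework, i.e., all the points of p_i are collinear. -/

import Mathlib

open scoped BigOperators

noncomputable section

/-- Points in the Euclidean plane. -/
abbrev Pt : Type := EuclideanSpace ℝ (Fin 2)

/-- The flattened space of planar configurations indexed by `ι`
(two real coordinates for each vertex). -/
abbrev Conf (ι : Type*) : Type _ := EuclideanSpace ℝ (ι × Fin 2)

/-- The position of agent `i` in the configuration `p`. -/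
def pt {ι : Type*} (p : Conf ι) (i : ι) : Pt := WithLp.toLp 2 (fun c => p (i, c))

/-- The sub-configuration of `p` on the vertices in `S`. -/
def restr {ι : Type*} (S : Set ι) (p : Conf ι) : Conf ↥S := WithLp.toLp 2 (fun ic : ↥S × Fin 2 => p ((ic.1 : ι), ic.2))

/-- The configuration space `P_G`: embeddings of the vertex set in the plane for which
adjacent vertices have distinct positions. -/
def configSpace {ι : Type*} (G : SimpleGraph ι) : Set (Conf ι) :=
  {p | ∀ i j : ι, G.Adj i j → pt p i ≠ pt p j}

/-- A Henneberg sequence for a triangulated Laman graph `G`, encoded by the order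
`ord` in which the vertices appear, and for every step `l ≥ 2` the two earlier steps
`par1 l`, `par2 l`, whose (adjacent) vertices the new vertex `ord l` is joined to.
The edges of `G` are exactly the initial edge together with the edges created at
each step. -/
structure Henneberg {ι : Type*} (G : SimpleGraph ι) : Type _ where
  two_le : 2 ≤ Nat.card ι
  ord : Fin (Nat.card ι) ≃ ι
  par1 : Fin (Nat.card ι) → Fin (Nat.card ι)
  par2 : Fin (Nat.card ι) → Fin (Nat.card ι)
  par1_lt : ∀ l : Fin (Nat.card ι), 2 ≤ (l : ℕ) → par1 l < l
  par2_lt : ∀ l : Fin (Nat.card ι), 2 ≤ (l : ℕ) → par2 l < l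
  par_ne : ∀ l : Fin (Nat.card ι), 2 ≤ (l : ℕ) → par1 l ≠ par2 l
  par_adj : ∀ l : Fin (Nat.card ι), 2 ≤ (l : ℕ) → G.Adj (ord (par1 l)) (ord (par2 l))
  edge_iff : ∀ i j : ι, G.Adj i j ↔
    (s(i, j) = s(ord ⟨0, by omega⟩, ord ⟨1, by omega⟩) ∨
      ∃ l : Fin (Nat.card ι), 2 ≤ (l : ℕ) ∧
        (s(i, j) = s(ord (par1 l), ord l) ∨ s(i, j) = s(ord (par2 l), ord l)))

/-- A graph is a triangulated Laman graph if it is (essentially) a single vertex, or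
it can be built by a Henneberg sequence in which each new vertex is joined to the two
endpoints of an existing edge. -/
def IsTriangulatedLaman {ι : Type*} (G : SimpleGraph ι) : Prop :=
  Nat.card ι ≤ 1 ∨ Nonempty (Henneberg G)

open Classical in
/-- The potential `Φ` induced by `G`, with control laws `f i j = u_{ij}(⬝, d̄_{ij})`:
`Φ(p) = Σ_{(i,j) ∈ E} ∫_1^{‖x_i - x_j‖} s u_{ij}(s, d̄_{ij}) ds`
(each edge is counted once; the double sum counts it twice, whence the factor 1/2). -/
def potential {ι : Type*} [Fintype ι] (G : SimpleGraph ι) (f : ι → ι → ℝ → ℝ)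
    (p : Conf ι) : ℝ :=
  (1 / 2) * ∑ i : ι, ∑ j : ι,
    if G.Adj i j then ∫ s in (1 : ℝ)..(dist (pt p i) (pt p j)), s * f i j s else 0

open Classical in
/-- The right-hand side of the formation control system
`ẋ_i = Σ_{j ∈ N_i} u_{ij}(‖x_i - x_j‖, d̄_{ij}) (x_j - x_i)`. -/
def formationField {ι : Type*} [Fintype ι] (G : SimpleGraph ι) (f : ι → ι → ℝ → ℝ)
    (p : Conf ι) : Conf ι :=
  WithLp.toLp 2 (fun ic : ι × Fin 2 => ∑ j : ι,
    if G.Adj ic.1 j then f ic.1 j (dist (pt p ic.1) (pt p j)) * (p (j, ic.2) - p (ic.1, ic.2))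
    else 0)

/-- A monotone attraction/repulsion function: `f` is C¹ on `ℝ_{>0}`,
`d(x f(x))/dx > 0` for `x > 0`, `f` has a unique (positive) zero, and
`∫_x^1 s f(s) ds → -∞` as `x → 0⁺`. -/
structure IsMonoAttRep (f : ℝ → ℝ) : Prop where
  contDiff : ContDiffOn ℝ 1 f (Set.Ioi 0)
  deriv_pos : ∀ x : ℝ, 0 < x → 0 < deriv (fun y => y * f y) x
  unique_zero : ∃! x : ℝ, 0 < x ∧ f x = 0
  collision : Filter.Tendsto (fun x : ℝ => ∫ s in x..(1 : ℝ), s * f s)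
    (nhdsWithin 0 (Set.Ioi 0)) Filter.atBot

/-- 2×2 rotation matrices. -/
def IsRotation (θ : Matrix (Fin 2) (Fin 2) ℝ) : Prop := θ * θ.transpose = 1 ∧ θ.det = 1

/-- The action of `γ = (θ, v) ∈ SE(2)` on configurations: `γ·p = (θ x_1 + v, …, θ x_n + v)`. -/
def se2Act {ι : Type*} (θ : Matrix (Fin 2) (Fin 2) ℝ) (v : Pt) (p : Conf ι) : Conf ι :=
  WithLp.toLp 2 (fun ic : ι × Fin 2 => θ.mulVec (pt p ic.1).ofLp ic.2 + v ic.2)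

/-- The SE(2)-orbit `O_p` of a configuration `p`. -/
def se2Orbit {ι : Type*} (p : Conf ι) : Set (Conf ι) :=
  {q | ∃ θ v, IsRotation θ ∧ q = se2Act θ v p}

/-- Rotation by 90 degrees. -/
def rotJ : Matrix (Fin 2) (Fin 2) ℝ := !![0, -1; 1, 0]

/-- The infinitesimal rotation of a configuration. -/
def infRot {ι : Type*} (p : Conf ι) : Conf ι := WithLp.toLp 2 (fun ic : ι × Fin 2 => rotJ.mulVec (pt p ic.1).ofLp ic.2)

/-- The infinitesimal translation in coordinate direction `c`. -/
def transl (ι : Type*) (c : Fin 2) : Conf ι := WithLp.toLp 2 (fun ic : ι × Fin 2 => if ic.2 = c then 1 else 0)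

/-- The tangent space at `p` of the SE(2)-orbit `O_p`. -/
def orbitTangent {ι : Type*} (p : Conf ι) : Submodule ℝ (Conf ι) :=
  Submodule.span ℝ {infRot p, transl ι 0, transl ι 1}

/-- The Hessian matrix `H_p = ∂²Φ(p)/∂p²`. -/
def hessianMat {ι : Type*} [Fintype ι] [DecidableEq ι] (Φ : Conf ι → ℝ) (p : Conf ι) :
    Matrix (ι × Fin 2) (ι × Fin 2) ℝ :=
  Matrix.of fun a b =>
    iteratedFDeriv ℝ 2 Φ p ![EuclideanSpace.single a 1, EuclideanSpace.single b 1]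

/-- The Hessian of `Φ` at `p` with respect to the coordinates of the vertices in `S`
(for `Φ` depending only on those coordinates this is the Hessian of the induced
function of the positions of the vertices in `S`). -/
def hessianMatOn {ι : Type*} [Fintype ι] [DecidableEq ι] (Φ : Conf ι → ℝ) (p : Conf ι) (S : Set ι) :
    Matrix (↥S × Fin 2) (↥S × Fin 2) ℝ :=
  Matrix.of fun a b => hessianMat Φ p ((a.1 : ι), a.2) ((b.1 : ι), b.2)

open Classical in
/-- `N₊(A)`: the number of positive eigenvalues of a real symmetric matrix,
counted with multiplicity. -/
def nPos {m : Type*} [Finite m] (A : Matrix m m ℝ) : ℕ :=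
  letI := Fintype.ofFinite m
  letI := Classical.decEq m
  if h : A.IsHermitian then Fintype.card {i // 0 < h.eigenvalues i} else 0

open Classical in
/-- `N₋(A)`: the number of negative eigenvalues of a real symmetric matrix,
counted with multiplicity. -/
def nNeg {m : Type*} [Finite m] (A : Matrix m m ℝ) : ℕ :=
  letI := Fintype.ofFinite m
  letI := Classical.decEq m
  if h : A.IsHermitian then Fintype.card {i // h.eigenvalues i < 0} else 0

open Classical in
/-- `N₀(A)`: the number of zero eigenvalues of a real symmetric matrix,
counted with multiplicity. -/
def nZero {m : Type*} [Finite m] (A : Matrix m m ℝ) : ℕ :=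
  letI := Fintype.ofFinite m
  letI := Classical.decEq m
  if h : A.IsHermitian then Fintype.card {i // h.eigenvalues i = 0} else 0

/-- `Φ` is an equivariant Morse function on `P_G`: it has finitely many critical orbits,
and each critical orbit is nondegenerate (the Hessian has exactly three zero eigenvalues). -/
def IsEquivariantMorse {ι : Type*} [Fintype ι] [DecidableEq ι] (G : SimpleGraph ι)
    (Φ : Conf ι → ℝ) : Prop :=
  {O : Set (Conf ι) | ∃ p ∈ configSpace G, gradient Φ p = 0 ∧ O = se2Orbit p}.Finite ∧
  ∀ p ∈ configSpace G, gradient Φ p = 0 → nZero (hessianMat Φ p) = 3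

/-- `i`, `j`, `k` form a 3-cycle of `G`. -/
def Is3Cycle {ι : Type*} (G : SimpleGraph ι) (i j k : ι) : Prop :=
  G.Adj i j ∧ G.Adj i k ∧ G.Adj j k

/-- A framework `(G, p)` is strongly rigid if every 3-cycle of `G` is embedded by `p`
as a nondegenerate triangle. -/
def StronglyRigid {ι : Type*} (G : SimpleGraph ι) (p : Conf ι) : Prop :=
  ∀ i j k : ι, Is3Cycle G i j k →
    LinearIndependent ℝ ![pt p j - pt p i, pt p k - pt p i]

/-- The target distances satisfy the strict triangle inequalities associated with `G`. -/
def StrictTriangleIneqs {ι : Type*} (G : SimpleGraph ι) (dbar : ι → ι → ℝ) : Prop :=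
  ∀ i j k : ι, Is3Cycle G i j k →
    dbar j k < dbar i j + dbar i k ∧ dbar i k < dbar i j + dbar j k ∧
      dbar i j < dbar i k + dbar j k

/-- A triangulated formation system: a formation control system induced by a
triangulated Laman graph, with target distances satisfying the strict triangle
inequalities, monotone attraction/repulsion control laws vanishing at the target
distances, and whose potential is an equivariant Morse function. -/
structure IsTriFormation {ι : Type*} [Fintype ι] [DecidableEq ι] (G : SimpleGraph ι)
    (f : ι → ι → ℝ → ℝ) (dbar : ι → ι → ℝ) : Prop where
  laman : IsTriangulatedLaman G
  fsymm : ∀ i j, f i j = f j i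
  dsymm : ∀ i j, dbar i j = dbar j i
  dpos : ∀ i j, G.Adj i j → 0 < dbar i j
  mono : ∀ i j, G.Adj i j → IsMonoAttRep (f i j)
  fzero : ∀ i j, G.Adj i j → f i j (dbar i j) = 0
  triangle : StrictTriangleIneqs G dbar
  morse : IsEquivariantMorse G (potential G f)

/-- The (critical) orbit of `p` is exponentially stable: the Hessian of `Φ` at `p` has
exactly three zero eigenvalues and no negative eigenvalues (all the others positive). -/
def ExpStableAt {ι : Type*} [Fintype ι] [DecidableEq ι] (Φ : Conf ι → ℝ) (p : Conf ι) : Prop :=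
  nZero (hessianMat Φ p) = 3 ∧ nNeg (hessianMat Φ p) = 0

/-- Generating relation for the independent partition: at each step `l ≥ 2` of the
Henneberg sequence in which the new vertex is aligned with its two parents, the two
new edges are related to the parent edge. -/
def triGen {ι : Type*} {G : SimpleGraph ι} (H : Henneberg G) (p : Conf ι) :
    Sym2 ι → Sym2 ι → Prop := fun e e' =>
  ∃ l : Fin (Nat.card ι), 2 ≤ (l : ℕ) ∧
    Collinear ℝ {pt p (H.ord (H.par1 l)), pt p (H.ord (H.par2 l)), pt p (H.ord l)} ∧
    e' = s(H.ord (H.par1 l), H.ord (H.par2 l)) ∧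
    (e = s(H.ord (H.par1 l), H.ord l) ∨ e = s(H.ord (H.par2 l), H.ord l))

/-- The independent partition of the edge set of `G` for the framework `(G, p)`,
computed along the Henneberg sequence `H`. -/
def indepPartition {ι : Type*} {G : SimpleGraph ι} (H : Henneberg G) (p : Conf ι) :
    Set (Set (Sym2 ι)) :=
  {C | ∃ e ∈ G.edgeSet, C = {e' | e' ∈ G.edgeSet ∧ Relation.EqvGen (triGen H p) e e'}}

/-- The set `V_i` of vertices incident to the edges in a class `C`. -/
def classVerts {ι : Type*} (C : Set (Sym2 ι)) : Set ι := {v | ∃ e ∈ C, v ∈ e}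

/-!
Relate each new edge of a collinear step to the parent edge it is attached to. This relation
is functional and strictly lowers the step at which an edge appears, so every class of the
independent partition is a tree of edges hanging from a root edge that has no parent. The
vertices of a class, in Henneberg order, are the two ends of the root followed by the new
vertices of the collinear steps whose parent edge lies in the class, each joined to the two
ends of that parent edge: this is a Henneberg sequence of the class graph. At a collinear step
the new vertex lies on the line through its parents, which are distinct points because they
are adjacent, so along the tree every vertex lies on the line through the ends of the root.
-/

theorem Collinear.of_subset_affineSpan {k V P : Type*} [DivisionRing k] [AddCommGroup V]
    [Module k V] [AddTorsor V P] {s t : Set P} (ht : Collinear k t)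
    (h : s ⊆ affineSpan k t) : Collinear k s := by
  rw [collinear_iff_rank_le_one] at ht ⊢
  refine le_trans (Submodule.rank_mono ?_) ht
  have hspan : vectorSpan k (affineSpan k t : Set P) = vectorSpan k t := by
    rw [← direction_affineSpan, AffineSubspace.affineSpan_coe, direction_affineSpan]
  exact (vectorSpan_mono k h).trans_eq hspan

namespace Relation

variable {α : Type*} {r : α → α → Prop}

theorem exists_reflTransGen_forall_not (hwf : WellFounded (flip r)) (x : α) :
    ∃ z, ReflTransGen r x z ∧ ∀ y, ¬ r z y := by
  induction x using hwf.induction with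
  | _ x ih =>
    by_cases h : ∃ y, r x y
    · obtain ⟨y, hxy⟩ := h
      obtain ⟨z, hyz, hz⟩ := ih y hxy
      exact ⟨z, .head hxy hyz, hz⟩
    · exact ⟨x, .refl, not_exists.mp h⟩

theorem eqvGen_iff_reflTransGen_of_functional (hr : ∀ {a b c}, r a b → r a c → b = c)
    {x z : α} (hxz : ReflTransGen r x z) (hz : ∀ y, ¬ r z y) {y : α} :
    EqvGen r x y ↔ ReflTransGen r y z := by
  have key : ∀ u w, EqvGen r u w → (ReflTransGen r u z ↔ ReflTransGen r w z) := by
    intro u w h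
    induction h with
    | rel u w huw =>
      refine ⟨fun huz => ?_, .head huw⟩
      rcases huz.cases_head with rfl | ⟨c, huc, hcz⟩
      · exact absurd huw (hz w)
      · exact hr huc huw ▸ hcz
    | refl => exact Iff.rfl
    | symm _ _ _ ih => exact ih.symm
    | trans _ _ _ _ _ ih₁ ih₂ => exact ih₁.trans ih₂
  have hle := EqvGen.reflTransGen_le_eqvGen r
  exact ⟨fun h => (key _ _ h).1 hxz, fun h => .trans _ _ _ (hle _ _ hxz) (.symm _ _ (hle _ _ h))⟩

end Relation

theorem OrderIso.fin_apply_zero_and_one {V : Type*} [LinearOrder V] {k : ℕ} (hk : 2 ≤ k)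
    (e : Fin k ≃o V) {a b : V} (hab : a < b) (hb : ∀ v, v ≠ a → v ≠ b → b < v) :
    e ⟨0, by omega⟩ = a ∧ e ⟨1, by omega⟩ = b := by
  have hlate : ∀ j : Fin k, e j = a ∨ e j = b ∨ e.symm b < j := fun j => by
    by_cases ha : e j = a
    · exact .inl ha
    by_cases hb' : e j = b
    · exact .inr (.inl hb')
    exact .inr (.inr (e.symm_apply_lt.mpr (hb _ ha hb')))
  have ha : e.symm a < e.symm b := e.symm.lt_iff_lt.mpr hab
  have h₀ : e ⟨0, by omega⟩ = a := by
    rcases hlate ⟨0, by omega⟩ with h | h | h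
    · exact h
    · rw [← h, OrderIso.symm_apply_apply] at ha
      exact absurd (Fin.lt_def.mp ha) (Nat.not_lt_zero _)
    · exact absurd (Fin.lt_def.mp (ha.trans h)) (Nat.not_lt_zero _)
  refine ⟨h₀, ?_⟩
  rcases hlate ⟨1, by omega⟩ with h | h | h
  · exact absurd (e.injective (h.trans h₀.symm)) (by simp [Fin.ext_iff])
  · exact h
  · have hb₀ : e.symm b = ⟨0, by omega⟩ := Fin.ext (by rw [Fin.lt_def] at h; simpa using h)
    rw [e.symm_apply_eq, h₀] at hb₀
    exact absurd hb₀ hab.ne'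

theorem isTriangulatedLaman_of_parents {V β : Type*} [Finite V] [LinearOrder β]
    {G : SimpleGraph V} (f : V → β) (hf : Function.Injective f) (a b : V) (q₁ q₂ : V → V)
    (hab : f a < f b) (hb : ∀ v, v ≠ a → v ≠ b → f b < f v)
    (hq₁ : ∀ v, f b < f v → f (q₁ v) < f v) (hq₂ : ∀ v, f b < f v → f (q₂ v) < f v)
    (hadj : ∀ v, f b < f v → G.Adj (q₁ v) (q₂ v))
    (hedge : ∀ x y, G.Adj x y ↔ s(x, y) = s(a, b) ∨
      ∃ v, f b < f v ∧ (s(x, y) = s(q₁ v, v) ∨ s(x, y) = s(q₂ v, v))) :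
    IsTriangulatedLaman G := by
  let _ : LinearOrder V := LinearOrder.lift' f hf
  have hk : 2 ≤ Nat.card V := by
    have : Nontrivial V := ⟨⟨a, b, hf.ne_iff.mp hab.ne⟩⟩
    exact Finite.one_lt_card
  let _ := Fintype.ofFinite V
  let e : Fin (Nat.card V) ≃o V := Fintype.orderIsoFinOfCardEq V Nat.card_eq_fintype_card.symm
  obtain ⟨he₀, he₁⟩ := e.fin_apply_zero_and_one hk hab hb
  have hlate : ∀ l : Fin (Nat.card V), 2 ≤ (l : ℕ) ↔ f b < f (e l) := fun l => by
    change _ ↔ b < e l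
    rw [← he₁, e.lt_iff_lt, Fin.lt_def]
    rfl
  refine .inr ⟨⟨hk, e.toEquiv, fun l => e.symm (q₁ (e l)), fun l => e.symm (q₂ (e l)),
    fun l hl => e.symm_apply_lt.mpr (hq₁ _ ((hlate l).mp hl)),
    fun l hl => e.symm_apply_lt.mpr (hq₂ _ ((hlate l).mp hl)),
    fun l hl h => (hadj _ ((hlate l).mp hl)).ne (e.symm.injective h),
    fun l hl => by simpa using hadj _ ((hlate l).mp hl), fun x y => ?_⟩⟩
  simp only [OrderIso.coe_toEquiv, OrderIso.apply_symm_apply, he₀, he₁, hedge]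
  refine or_congr_right ⟨fun ⟨v, hv, hxy⟩ => ⟨e.symm v, ?_, ?_⟩,
    fun ⟨l, hl, hxy⟩ => ⟨e l, (hlate l).mp hl, hxy⟩⟩
  · simpa [hlate] using hv
  · simpa using hxy

theorem SimpleGraph.induce_fromEdgeSet_adj_iff {V : Type*} {C : Set (Sym2 V)}
    (hC : ∀ e ∈ C, ¬ e.IsDiag) {W : Set V} {x y : W} :
    ((SimpleGraph.fromEdgeSet C).induce W).Adj x y ↔ s((x : V), y) ∈ C := by
  rw [SimpleGraph.induce_adj, SimpleGraph.fromEdgeSet_adj, and_iff_left_iff_imp]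
  exact fun h => Sym2.mk_isDiag_iff.not.mp (hC _ h)

theorem isTriangulatedLaman_induce_fromEdgeSet_of_parents {ι β : Type*} [LinearOrder β]
    {C : Set (Sym2 ι)} {W : Set ι} [Finite W] (hC : ∀ e ∈ C, ¬ e.IsDiag) (f : ι → β)
    (hf : Set.InjOn f W) {a b : ι} (ha : a ∈ W) (hbW : b ∈ W) (q₁ q₂ : ι → ι)
    (hab : f a < f b) (hb : ∀ v ∈ W, v ≠ a → v ≠ b → f b < f v)
    (hq₁ : ∀ v ∈ W, f b < f v → q₁ v ∈ W ∧ f (q₁ v) < f v)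
    (hq₂ : ∀ v ∈ W, f b < f v → q₂ v ∈ W ∧ f (q₂ v) < f v)
    (hadj : ∀ v ∈ W, f b < f v → s(q₁ v, q₂ v) ∈ C)
    (hedge : ∀ x ∈ W, ∀ y ∈ W, s(x, y) ∈ C ↔ s(x, y) = s(a, b) ∨
      ∃ v ∈ W, f b < f v ∧ (s(x, y) = s(q₁ v, v) ∨ s(x, y) = s(q₂ v, v))) :
    IsTriangulatedLaman ((SimpleGraph.fromEdgeSet C).induce W) := by
  classical
  let lift : (ι → ι) → W → W := fun q v => if h : q v ∈ W then ⟨q v, h⟩ else v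
  have coe_lift : ∀ {q : ι → ι} (v : W), q v ∈ W → (lift q v : ι) = q v :=
    fun v h => by simp [lift, h]
  have sym2_eq : ∀ x y x' y' : W, s(x, y) = s(x', y') ↔ s((x : ι), y) = s((x' : ι), y') :=
    fun _ _ _ _ => (Sym2.map.injective Subtype.val_injective).eq_iff.symm
  refine isTriangulatedLaman_of_parents (fun v : W => f v) (Set.injOn_iff_injective.mp hf)
    ⟨a, ha⟩ ⟨b, hbW⟩ (lift q₁) (lift q₂) hab
    (fun v h₁ h₂ => hb v v.2 (Subtype.coe_ne_coe.mpr h₁) (Subtype.coe_ne_coe.mpr h₂))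
    (fun v hv => coe_lift v (hq₁ v v.2 hv).1 ▸ (hq₁ v v.2 hv).2)
    (fun v hv => coe_lift v (hq₂ v v.2 hv).1 ▸ (hq₂ v v.2 hv).2)
    (fun v hv => ?_) (fun x y => ?_)
  · rw [SimpleGraph.induce_fromEdgeSet_adj_iff hC, coe_lift v (hq₁ v v.2 hv).1,
      coe_lift v (hq₂ v v.2 hv).1]
    exact hadj v v.2 hv
  · rw [SimpleGraph.induce_fromEdgeSet_adj_iff hC, hedge x x.2 y y.2, sym2_eq]
    refine or_congr_right ⟨fun ⟨v, hvW, hv, hxy⟩ => ⟨⟨v, hvW⟩, hv, ?_⟩,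
      fun ⟨v, hv, hxy⟩ => ⟨v, v.2, hv, ?_⟩⟩
    · rwa [sym2_eq, sym2_eq, coe_lift _ (hq₁ v hvW hv).1, coe_lift _ (hq₂ v hvW hv).1]
    · rwa [sym2_eq, sym2_eq, coe_lift _ (hq₁ v v.2 hv).1, coe_lift _ (hq₂ v v.2 hv).1] at hxy

namespace Henneberg

open Relation

variable {ι : Type*} {G : SimpleGraph ι} (H : Henneberg G)

def parentEdge (l : Fin (Nat.card ι)) : Sym2 ι := s(H.ord (H.par1 l), H.ord (H.par2 l))

def childEdge₁ (l : Fin (Nat.card ι)) : Sym2 ι := s(H.ord (H.par1 l), H.ord l)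

def childEdge₂ (l : Fin (Nat.card ι)) : Sym2 ι := s(H.ord (H.par2 l), H.ord l)

def edgeStage (e : Sym2 ι) : Fin (Nat.card ι) :=
  Sym2.lift ⟨fun i j => max (H.ord.symm i) (H.ord.symm j), fun _ _ => max_comm _ _⟩ e

def IsCollinearStep (p : Conf ι) (l : Fin (Nat.card ι)) : Prop :=
  2 ≤ (l : ℕ) ∧ Collinear ℝ {pt p (H.ord (H.par1 l)), pt p (H.ord (H.par2 l)), pt p (H.ord l)}

/-- For a root `ρ` (an edge without parent edge), this is the class of `ρ` in the independent
partition. -/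
def descendantEdges (p : Conf ι) (ρ : Sym2 ι) : Set (Sym2 ι) :=
  {e | e ∈ G.edgeSet ∧ ReflTransGen (triGen H p) e ρ}

def descendantSteps (p : Conf ι) (ρ : Sym2 ι) : Set (Fin (Nat.card ι)) :=
  {l | H.IsCollinearStep p l ∧ H.parentEdge l ∈ H.descendantEdges p ρ}

variable {H} {p : Conf ι} {l : Fin (Nat.card ι)} {e e' ρ : Sym2 ι}

protected theorem finite (H : Henneberg G) : Finite ι :=
  Nat.finite_of_card_ne_zero (by have := H.two_le; omega)

theorem edgeStage_mk (a b : Fin (Nat.card ι)) : H.edgeStage s(H.ord a, H.ord b) = max a b := by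
  simp [edgeStage]

theorem edgeStage_parentEdge_lt (hl : 2 ≤ (l : ℕ)) : H.edgeStage (H.parentEdge l) < l := by
  rw [parentEdge, edgeStage_mk]
  exact max_lt (H.par1_lt l hl) (H.par2_lt l hl)

theorem edgeStage_childEdge₁ (hl : 2 ≤ (l : ℕ)) : H.edgeStage (H.childEdge₁ l) = l := by
  rw [childEdge₁, edgeStage_mk, max_eq_right (H.par1_lt l hl).le]

theorem edgeStage_childEdge₂ (hl : 2 ≤ (l : ℕ)) : H.edgeStage (H.childEdge₂ l) = l := by
  rw [childEdge₂, edgeStage_mk, max_eq_right (H.par2_lt l hl).le]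

theorem parentEdge_mem_edgeSet (hl : 2 ≤ (l : ℕ)) : H.parentEdge l ∈ G.edgeSet :=
  H.par_adj l hl

theorem childEdge₁_mem_edgeSet (hl : 2 ≤ (l : ℕ)) : H.childEdge₁ l ∈ G.edgeSet :=
  (H.edge_iff _ _).mpr (.inr ⟨l, hl, .inl rfl⟩)

theorem childEdge₂_mem_edgeSet (hl : 2 ≤ (l : ℕ)) : H.childEdge₂ l ∈ G.edgeSet :=
  (H.edge_iff _ _).mpr (.inr ⟨l, hl, .inr rfl⟩)

theorem exists_lt_eq_mk (he : e ∈ G.edgeSet) :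
    ∃ a b, a < b ∧ e = s(H.ord a, H.ord b) := by
  induction e using Sym2.ind with
  | _ x y =>
    have hxy : H.ord.symm x ≠ H.ord.symm y := H.ord.symm.injective.ne (G.ne_of_adj he)
    rcases hxy.lt_or_gt with h | h
    · exact ⟨_, _, h, by simp⟩
    · exact ⟨_, _, h, by simp [Sym2.eq_swap]⟩

theorem triGen_iff : triGen H p e e' ↔ ∃ l, H.IsCollinearStep p l ∧ e' = H.parentEdge l ∧
    (e = H.childEdge₁ l ∨ e = H.childEdge₂ l) := by
  simp only [triGen, IsCollinearStep, parentEdge, childEdge₁, childEdge₂, and_assoc]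

theorem edgeStage_lt_of_triGen (h : triGen H p e e') : H.edgeStage e' < H.edgeStage e := by
  obtain ⟨l, ⟨hl, -⟩, rfl, rfl | rfl⟩ := triGen_iff.mp h
  · rw [edgeStage_childEdge₁ hl]; exact edgeStage_parentEdge_lt hl
  · rw [edgeStage_childEdge₂ hl]; exact edgeStage_parentEdge_lt hl

theorem edgeStage_le_of_reflTransGen (h : ReflTransGen (triGen H p) e e') :
    H.edgeStage e' ≤ H.edgeStage e := by
  induction h with
  | refl => exact le_rfl
  | tail _ h ih => exact (edgeStage_lt_of_triGen h).le.trans ih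

theorem wellFounded_flip_triGen : WellFounded (flip (triGen H p)) :=
  Subrelation.wf edgeStage_lt_of_triGen (InvImage.wf H.edgeStage wellFounded_lt)

/-- Each edge is created at a single step, hence has at most one parent edge. -/
theorem triGen_functional {e₁ e₂ : Sym2 ι} (h₁ : triGen H p e e₁) (h₂ : triGen H p e e₂) :
    e₁ = e₂ := by
  have stage : ∀ {e'}, triGen H p e e' → e' = H.parentEdge (H.edgeStage e) := by
    intro e' h
    obtain ⟨l, ⟨hl, -⟩, rfl, rfl | rfl⟩ := triGen_iff.mp h
    · rw [edgeStage_childEdge₁ hl]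
    · rw [edgeStage_childEdge₂ hl]
  rw [stage h₁, stage h₂]

theorem mem_edgeSet_of_reflTransGen (h : ReflTransGen (triGen H p) e e')
    (he : e ∈ G.edgeSet) : e' ∈ G.edgeSet := by
  rcases h.cases_tail with rfl | ⟨c, -, hc⟩
  · exact he
  · obtain ⟨l, ⟨hl, -⟩, rfl, -⟩ := triGen_iff.mp hc
    exact parentEdge_mem_edgeSet hl

theorem mem_descendantEdges_iff (hρ : ρ ∈ G.edgeSet) {e : Sym2 ι} :
    e ∈ H.descendantEdges p ρ ↔
      e = ρ ∨ ∃ l ∈ H.descendantSteps p ρ, e = H.childEdge₁ l ∨ e = H.childEdge₂ l := by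
  constructor
  · rintro ⟨-, hR⟩
    rcases hR.cases_head with rfl | ⟨c, hc, hcρ⟩
    · exact .inl rfl
    · obtain ⟨l, hl, rfl, he⟩ := triGen_iff.mp hc
      exact .inr ⟨l, ⟨hl, parentEdge_mem_edgeSet hl.1, hcρ⟩, he⟩
  · rintro (rfl | ⟨l, ⟨hl, -, hlρ⟩, he⟩)
    · exact ⟨hρ, .refl⟩
    · refine ⟨?_, .head (triGen_iff.mpr ⟨l, hl, rfl, he⟩) hlρ⟩
      rcases he with rfl | rfl
      exacts [childEdge₁_mem_edgeSet hl.1, childEdge₂_mem_edgeSet hl.1]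

theorem edgeStage_lt_of_mem_descendantSteps (hl : l ∈ H.descendantSteps p ρ) :
    H.edgeStage ρ < l :=
  (edgeStage_le_of_reflTransGen hl.2.2).trans_lt (edgeStage_parentEdge_lt hl.1.1)

theorem mem_classVerts_descendantEdges_iff (hρ : ρ ∈ G.edgeSet) {v : ι} :
    v ∈ classVerts (H.descendantEdges p ρ) ↔ v ∈ ρ ∨ H.ord.symm v ∈ H.descendantSteps p ρ := by
  constructor
  · rintro ⟨e, ⟨-, hR⟩, hv⟩
    induction hR using ReflTransGen.head_induction_on generalizing v with
    | refl => exact .inl hv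
    | head hec hcρ ih =>
      obtain ⟨l, hl, rfl, he⟩ := triGen_iff.mp hec
      have hstep : l ∈ H.descendantSteps p ρ := ⟨hl, parentEdge_mem_edgeSet hl.1, hcρ⟩
      rcases he with rfl | rfl <;> rcases Sym2.mem_iff.mp hv with rfl | rfl
      · exact ih (Sym2.mem_mk_left _ _)
      · exact .inr (by simpa using hstep)
      · exact ih (Sym2.mem_mk_right _ _)
      · exact .inr (by simpa using hstep)
  · rintro (hv | hv)
    · exact ⟨ρ, ⟨hρ, .refl⟩, hv⟩
    · exact ⟨_, (mem_descendantEdges_iff hρ).mpr (.inr ⟨_, hv, .inl rfl⟩), by simp [childEdge₁]⟩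

theorem pt_mem_affineSpan_of_reflTransGen (hp : p ∈ configSpace G) {x y : ι} {e : Sym2 ι}
    (h : ReflTransGen (triGen H p) e s(x, y)) {v : ι} (hv : v ∈ e) :
    pt p v ∈ affineSpan ℝ {pt p x, pt p y} := by
  induction h using ReflTransGen.head_induction_on generalizing v with
  | refl =>
    rcases Sym2.mem_iff.mp hv with rfl | rfl
    exacts [left_mem_affineSpan_pair _ _ _, right_mem_affineSpan_pair _ _ _]
  | head hec _ ih =>
    obtain ⟨l, ⟨hl, hcol⟩, rfl, he⟩ := triGen_iff.mp hec
    have h₁ := ih (Sym2.mem_mk_left _ _)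
    have h₂ := ih (Sym2.mem_mk_right _ _)
    have hnew : pt p (H.ord l) ∈ affineSpan ℝ {pt p x, pt p y} := by
      refine affineSpan_pair_le_of_mem_of_mem h₁ h₂ ?_
      exact hcol.mem_affineSpan_of_mem_of_ne (by simp) (by simp) (by simp)
        (hp _ _ (H.par_adj l hl))
    rcases he with rfl | rfl <;> rcases Sym2.mem_iff.mp hv with rfl | rfl
    exacts [h₁, hnew, h₂, hnew]

theorem collinear_pt_classVerts_descendantEdges (hp : p ∈ configSpace G) (ρ : Sym2 ι) :
    Collinear ℝ (pt p '' classVerts (H.descendantEdges p ρ)) := by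
  induction ρ using Sym2.ind with
  | _ x y =>
    refine (collinear_pair ℝ (pt p x) (pt p y)).of_subset_affineSpan ?_
    rintro - ⟨v, ⟨e, ⟨-, he⟩, hv⟩, rfl⟩
    exact pt_mem_affineSpan_of_reflTransGen hp he hv

theorem isTriangulatedLaman_descendantEdges (hρ : ρ ∈ G.edgeSet) :
    IsTriangulatedLaman ((SimpleGraph.fromEdgeSet (H.descendantEdges p ρ)).induce
      (classVerts (H.descendantEdges p ρ))) := by
  have := H.finite
  obtain ⟨a, b, hab, rfl⟩ := H.exists_lt_eq_mk hρ
  set S := H.descendantSteps p s(H.ord a, H.ord b)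
  set W := classVerts (H.descendantEdges p s(H.ord a, H.ord b))
  have hW : ∀ v, v ∈ W ↔ v ∈ s(H.ord a, H.ord b) ∨ H.ord.symm v ∈ S := fun v =>
    mem_classVerts_descendantEdges_iff hρ
  have hbS : ∀ l ∈ S, b < l := fun l hl => by
    simpa [edgeStage_mk, hab.le] using edgeStage_lt_of_mem_descendantSteps hl
  have hlate : ∀ v ∈ W, H.ord.symm (H.ord b) < H.ord.symm v → H.ord.symm v ∈ S := by
    intro v hv hbv
    rw [Equiv.symm_apply_apply] at hbv
    rcases (hW v).mp hv with h | h
    · rcases Sym2.mem_iff.mp h with rfl | rfl <;> simp at hbv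
      exact absurd hab hbv.not_gt
    · exact h
  have hpar : ∀ l ∈ S, H.ord (H.par1 l) ∈ W ∧ H.ord (H.par2 l) ∈ W := fun l hl =>
    ⟨⟨_, hl.2, Sym2.mem_mk_left _ _⟩, ⟨_, hl.2, Sym2.mem_mk_right _ _⟩⟩
  refine isTriangulatedLaman_induce_fromEdgeSet_of_parents
    (fun e he => G.not_isDiag_of_mem_edgeSet he.1) H.ord.symm H.ord.symm.injective.injOn
    ((hW _).mpr (.inl (Sym2.mem_mk_left _ _))) ((hW _).mpr (.inl (Sym2.mem_mk_right _ _)))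
    (fun v => H.ord (H.par1 (H.ord.symm v))) (fun v => H.ord (H.par2 (H.ord.symm v)))
    (by simpa using hab) (fun v hv hva hvb => ?_) (fun v hv hbv => ?_) (fun v hv hbv => ?_)
    (fun v hv hbv => (hlate v hv hbv).2) (fun x _ y _ => ?_)
  · rcases (hW v).mp hv with h | h
    · rcases Sym2.mem_iff.mp h with rfl | rfl <;> contradiction
    · simpa using hbS _ h
  · simpa using ⟨(hpar _ (hlate v hv hbv)).1, H.par1_lt _ (hlate v hv hbv).1.1⟩
  · simpa using ⟨(hpar _ (hlate v hv hbv)).2, H.par2_lt _ (hlate v hv hbv).1.1⟩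
  · rw [mem_descendantEdges_iff hρ]
    refine or_congr_right ⟨fun ⟨l, hl, h⟩ => ⟨H.ord l, (hW _).mpr (.inr (by simpa)), ?_⟩,
      fun ⟨v, hv, hbv, h⟩ => ⟨H.ord.symm v, hlate v hv hbv, ?_⟩⟩
    · exact ⟨by simpa using hbS l hl, by simpa [childEdge₁, childEdge₂] using h⟩
    · simpa [childEdge₁, childEdge₂] using h

end Henneberg

theorem stmt5_general {ι : Type*} (G : SimpleGraph ι) (H : Henneberg G) (p : Conf ι)
    (hp : p ∈ configSpace G) :
    ∀ C ∈ indepPartition H p,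
      IsTriangulatedLaman ((SimpleGraph.fromEdgeSet C).induce (classVerts C)) ∧
      Collinear ℝ (pt p '' classVerts C) := by
  rintro C ⟨e, he, rfl⟩
  obtain ⟨ρ, heρ, hρ⟩ :=
    Relation.exists_reflTransGen_forall_not (H.wellFounded_flip_triGen (p := p)) e
  have hclass : {e' | e' ∈ G.edgeSet ∧ Relation.EqvGen (triGen H p) e e'} =
      H.descendantEdges p ρ := by
    ext e'
    exact and_congr_right fun _ => Relation.eqvGen_iff_reflTransGen_of_functional
      (r := triGen H p) Henneberg.triGen_functional heρ hρ
  rw [hclass]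
  exact ⟨Henneberg.isTriangulatedLaman_descendantEdges
      (Henneberg.mem_edgeSet_of_reflTransGen heρ he),
    Henneberg.collinear_pt_classVerts_descendantEdges hp ρ⟩

/-- Theorem 3.2(1) of the paper. Each class of the independent partition
for `(G, p)` induces a sub-framework `(G_i, p_i)` such that `G_i` is a triangulated Laman
graph and `(G_i, p_i)` is a line framework. -/
theorem stmt5 {ι : Type*} [Fintype ι] (G : SimpleGraph ι) (hG : IsTriangulatedLaman G)
    (H : Henneberg G) (p : Conf ι) (hp : p ∈ configSpace G) :
    ∀ C ∈ indepPartition H p,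
      IsTriangulatedLaman ((SimpleGraph.fromEdgeSet C).induce (classVerts C)) ∧
      Collinear ℝ (pt p '' classVerts C) :=
  stmt5_general G H p hp
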